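/- Let n ≥ 5, let k ≥ 2 with 2k + 1 ≤ n, and let λ be the Heisenberg Lie multiplication on ℂⁿ with [e₍₂ᵢ₋₁₎, e₍₂ᵢ₎] = e₍₂ₖ₊₁₎ for 1 ≤ i ≤ k (brackets extended antisymmetrically, all other basis products zero). Then the Lie multiplication n₅,₁⊕𝔞ₙ₋₅ lies in closure(Orb(λ)). -/

import Mathlib

noncomputable section

abbrev V (n : ℕ) : Type := Fin n → ℂ

abbrev Bil (n : ℕ) : Type := V n →ₗ[ℂ] V n →ₗ[ℂ] V n

instance BilTop (n : ℕ) : TopologicalSpace (Bil n) :=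
  TopologicalSpace.induced (fun μ : Bil n => fun x y : V n => μ x y) inferInstance

/-- The change-of-basis action of a linear automorphism on multiplications. -/
def act {n : ℕ} (g : V n ≃ₗ[ℂ] V n) (μ : Bil n) : Bil n :=
  LinearMap.mk₂ ℂ (fun x y => g (μ (g.symm x) (g.symm y)))
    (fun x x' y => by simp)
    (fun c x y => by simp)
    (fun x y y' => by simp)
    (fun c x y => by simp)

/-- The orbit of a multiplication under the change-of-basis action. -/
def orb {n : ℕ} (μ : Bil n) : Set (Bil n) :=
  Set.range fun g : V n ≃ₗ[ℂ] V n => act g μ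

/-- Two multiplications are isomorphic iff they lie in the same orbit. -/
def Isom {n : ℕ} (μ ν : Bil n) : Prop := ∃ g : V n ≃ₗ[ℂ] V n, act g μ = ν

def levelOne {n : ℕ} (lam : Bil n) : Prop :=
  lam ≠ 0 ∧ closure (orb lam) ⊆ orb lam ∪ {0}

def levelTwo {n : ℕ} (lam : Bil n) : Prop :=
  (∀ μ ∈ closure (orb lam) \ orb lam, closure (orb μ) ⊆ orb μ ∪ {0}) ∧
  ∃ μ ∈ closure (orb lam) \ orb lam, μ ≠ 0

/-- `E n k` is the standard basis vector `e_{k+1}` of `ℂⁿ` (0-indexed `k`). -/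
def E (n k : ℕ) : V n := fun m => if (m : ℕ) = k then 1 else 0

/-- The bilinear multiplication determined by a table of products of basis vectors. -/
def ofTable {n : ℕ} (c : Fin n → Fin n → V n) : Bil n :=
  LinearMap.mk₂ ℂ (fun x y => ∑ i : Fin n, ∑ j : Fin n, (x i * y j) • c i j)
    (fun x x' y => by
      simp [add_mul, add_smul, Finset.sum_add_distrib])
    (fun a x y => by
      simp [Finset.smul_sum, smul_smul, mul_assoc])
    (fun x y y' => by
      simp [mul_add, add_smul, Finset.sum_add_distrib])
    (fun a x y => by
      simp [Finset.smul_sum, smul_smul, mul_assoc, mul_left_comm])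

def JordanMul {n : ℕ} (lam : Bil n) : Prop :=
  (∀ x y : V n, lam x y = lam y x) ∧
  ∀ x y : V n, lam (lam x x) (lam y x) = lam (lam (lam x x) y) x

def LieMul {n : ℕ} (lam : Bil n) : Prop :=
  (∀ x : V n, lam x x = 0) ∧
  ∀ x y z : V n, lam x (lam y z) + lam y (lam z x) + lam z (lam x y) = 0

def AssocMul {n : ℕ} (lam : Bil n) : Prop :=
  ∀ x y z : V n, lam (lam x y) z = lam x (lam y z)
/-- `n₅,₁ ⊕ 𝔞_{n-5}`: `[e₁,e₃] = e₅`, `[e₂,e₄] = e₅`. -/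
def n51 (n : ℕ) : Bil n :=
  ofTable fun i j =>
    if i.val = 0 ∧ j.val = 2 then E n 4
    else if i.val = 2 ∧ j.val = 0 then -E n 4
    else if i.val = 1 ∧ j.val = 3 then E n 4
    else if i.val = 3 ∧ j.val = 1 then -E n 4
    else 0

/-- `n₅,₂ ⊕ 𝔞_{n-5}`: `[e₁,e₂] = e₄`, `[e₁,e₃] = e₅`. -/
def n52 (n : ℕ) : Bil n :=
  ofTable fun i j =>
    if i.val = 0 ∧ j.val = 1 then E n 3
    else if i.val = 1 ∧ j.val = 0 then -E n 3
    else if i.val = 0 ∧ j.val = 2 then E n 4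
    else if i.val = 2 ∧ j.val = 0 then -E n 4
    else 0

/-- `r₂ ⊕ 𝔞_{n-2}`: `[e₁,e₂] = e₂`. -/
def r2 (n : ℕ) : Bil n :=
  ofTable fun i j =>
    if i.val = 0 ∧ j.val = 1 then E n 1
    else if i.val = 1 ∧ j.val = 0 then -E n 1
    else 0

/-- `g_{n,1}(α)`: `[e₁,e₂] = α e₂`, `[e₁,eᵢ] = eᵢ` for `3 ≤ i ≤ n`. -/
def g1 (n : ℕ) (α : ℂ) : Bil n :=
  ofTable fun i j =>
    if i.val = 0 ∧ j.val = 1 then α • E n 1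
    else if i.val = 1 ∧ j.val = 0 then -(α • E n 1)
    else if i.val = 0 ∧ 2 ≤ j.val then E n j.val
    else if j.val = 0 ∧ 2 ≤ i.val then -E n i.val
    else 0

/-- `g_{n,2}`: `[e₁,e₂] = e₂ + e₃`, `[e₁,eᵢ] = eᵢ` for `3 ≤ i ≤ n`. -/
def g2 (n : ℕ) : Bil n :=
  ofTable fun i j =>
    if i.val = 0 ∧ j.val = 1 then E n 1 + E n 2
    else if i.val = 1 ∧ j.val = 0 then -(E n 1 + E n 2)
    else if i.val = 0 ∧ 2 ≤ j.val then E n j.val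
    else if j.val = 0 ∧ 2 ≤ i.val then -E n i.val
    else 0

/-- The Heisenberg Lie multiplication on `ℂⁿ` with `[e_{2i-1}, e_{2i}] = e_{2k+1}`
for `1 ≤ i ≤ k` (0-indexed: `[e_{2m}, e_{2m+1}] = e_{2k}` for `0 ≤ m < k`). -/
def heis (n k : ℕ) : Bil n :=
  ofTable fun a b =>
    if a.val % 2 = 0 ∧ a.val < 2 * k ∧ b.val = a.val + 1 then E n (2 * k)
    else if b.val % 2 = 0 ∧ b.val < 2 * k ∧ a.val = b.val + 1 then -E n (2 * k)
    else 0

/-!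
Relabel the basis so that the first two Heisenberg pairs become `(e₁, e₃)` and `(e₂, e₄)` and the
centre becomes `e₅`; every other pair then consists of basis vectors outside `e₁, …, e₅`. All
products lie in `span {e₁, …, e₅}`, so scaling every basis vector outside it by `t` multiplies each
bracket involving such a vector by a positive power of `t` and leaves the others untouched. Letting
`t → 0` leaves exactly the brackets of `n₅,₁ ⊕ 𝔞ₙ₋₅`.
-/

variable {n : ℕ}

theorem ofTable_apply (c : Fin n → Fin n → V n) (x y : V n) :
    ofTable c x y = ∑ i, ∑ j, (x i * y j) • c i j := rfl

theorem act_apply (g : V n ≃ₗ[ℂ] V n) (μ : Bil n) (x y : V n) :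
    act g μ x y = g (μ (g.symm x) (g.symm y)) := rfl

theorem continuous_ofTable : Continuous (ofTable : (Fin n → Fin n → V n) → Bil n) :=
  continuous_induced_rng.2 <| by simp only [Function.comp_def, ofTable_apply]; fun_prop

theorem orb_act_subset (g : V n ≃ₗ[ℂ] V n) (μ : Bil n) : orb (act g μ) ⊆ orb μ := by
  rintro _ ⟨h, rfl⟩
  exact ⟨g.trans h, rfl⟩

theorem act_funCongrLeft_ofTable (σ : Equiv.Perm (Fin n)) (c : Fin n → Fin n → V n) :
    act (LinearEquiv.funCongrLeft ℂ ℂ σ) (ofTable c) =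
      ofTable fun i j => c (σ i) (σ j) ∘ σ := by
  refine LinearMap.ext₂ fun x y => ?_
  simp only [act_apply, ofTable_apply, LinearEquiv.funCongrLeft_symm,
    LinearEquiv.funCongrLeft_apply, map_sum, map_smul]
  rw [← Equiv.sum_comp σ]
  refine Finset.sum_congr rfl fun i _ => ?_
  rw [← Equiv.sum_comp σ]
  simp only [LinearMap.funLeft_apply, Equiv.symm_apply_apply]
  rfl

theorem act_piCongrRight_ofTable (d : Fin n → ℂ) (hd : ∀ i, d i ≠ 0) (c : Fin n → Fin n → V n) :
    act (LinearEquiv.piCongrRight fun i => LinearEquiv.smulOfNeZero ℂ ℂ (d i) (hd i)) (ofTable c) =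
      ofTable fun i j => ((d i)⁻¹ * (d j)⁻¹) • (d * c i j) := by
  refine LinearMap.ext₂ fun x y => ?_
  simp only [act_apply, ofTable_apply, map_sum, map_smul]
  refine Finset.sum_congr rfl fun i _ => Finset.sum_congr rfl fun j _ => funext fun m => ?_
  simp only [LinearEquiv.piCongrRight_symm, LinearEquiv.piCongrRight_apply,
    LinearEquiv.smulOfNeZero_symm_apply, LinearEquiv.smulOfNeZero_apply, Pi.smul_apply,
    Pi.mul_apply, smul_eq_mul, Units.smul_def, Units.val_inv_eq_inv_val, Units.val_mk0]
  ring

theorem ofTable_restrict_mem_closure_orb (c : Fin n → Fin n → V n) (p : Fin n → Prop)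
    [DecidablePred p] (hc : ∀ i j m, ¬p m → c i j m = 0) :
    ofTable (fun i j => if p i ∧ p j then c i j else 0) ∈ closure (orb (ofTable c)) := by
  let w : ℂ → Fin n → ℂ := fun t i => if p i then 1 else t
  have hw : ∀ i, Continuous (w · i) := fun i => by
    by_cases hi : p i <;> simp only [w, hi, if_true, if_false] <;> fun_prop
  have hcont : Continuous fun t => ofTable fun i j => (w t i * w t j) • c i j :=
    continuous_ofTable.comp <| continuous_pi fun i => continuous_pi fun j =>
      ((hw i).mul (hw j)).smul continuous_const
  have hmem : ∀ t ∈ ({0}ᶜ : Set ℂ),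
      (ofTable fun i j => (w t i * w t j) • c i j) ∈ orb (ofTable c) := by
    intro t ht
    have hd : ∀ i, (w t i)⁻¹ ≠ 0 := fun i => by by_cases hi : p i <;> simp_all [w]
    refine ⟨_, (act_piCongrRight_ofTable (fun i => (w t i)⁻¹) hd c).trans ?_⟩
    congr! 3 with i j
    simp only [inv_inv]
    congr 1
    funext m
    by_cases hm : p m <;> simp [w, hm, hc]
  have hzero : (ofTable fun i j => (w 0 i * w 0 j) • c i j) =
      ofTable fun i j => if p i ∧ p j then c i j else 0 := by
    congr! 3 with i j
    by_cases hi : p i <;> by_cases hj : p j <;> simp [w, hi, hj]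
  rw [← hzero]
  exact mem_closure_of_tendsto ((hcont.tendsto 0).mono_left nhdsWithin_le_nhds)
    (eventually_nhdsWithin_of_forall hmem)

abbrev IsHeisPair (k a b : ℕ) : Prop := a % 2 = 0 ∧ a < 2 * k ∧ b = a + 1

def heisTable (n k : ℕ) : Fin n → Fin n → V n := fun a b =>
  if IsHeisPair k a b then E n (2 * k) else if IsHeisPair k b a then -E n (2 * k) else 0

theorem heis_eq_ofTable (n k : ℕ) : heis n k = ofTable (heisTable n k) := rfl

-- 1-indexed: swaps `e₂ ↔ e₃` and `e₅ ↔ e₂ₖ₊₁`.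
def heisRelabel {n k : ℕ} (hk : 2 ≤ k) (hkn : 2 * k + 1 ≤ n) : Equiv.Perm (Fin n) :=
  Equiv.swap ⟨1, by omega⟩ ⟨2, by omega⟩ * Equiv.swap ⟨4, by omega⟩ ⟨2 * k, by omega⟩

section heisRelabel

variable {k : ℕ} (hk : 2 ≤ k) (hkn : 2 * k + 1 ≤ n)

theorem heisRelabel_val (i : Fin n) :
    (heisRelabel hk hkn i : ℕ) = if i.val = 1 then 2 else if i.val = 2 then 1
      else if i.val = 4 then 2 * k else if i.val = 2 * k then 4 else i.val := by
  simp only [heisRelabel, Equiv.Perm.mul_apply, Equiv.swap_apply_def, Fin.ext_iff]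
  split_ifs <;> simp_all <;> omega

theorem E_heisRelabel (m : Fin n) : E n (2 * k) (heisRelabel hk hkn m) = E n 4 m := by
  simp only [E, heisRelabel_val]
  split_ifs <;> first | rfl | omega

theorem heisTable_heisRelabel (i j : Fin n) :
    heisTable n k (heisRelabel hk hkn i) (heisRelabel hk hkn j) ∘ heisRelabel hk hkn =
      if IsHeisPair k (heisRelabel hk hkn i) (heisRelabel hk hkn j) then E n 4
      else if IsHeisPair k (heisRelabel hk hkn j) (heisRelabel hk hkn i) then -E n 4
      else 0 := by
  unfold heisTable
  split_ifs <;> ext m <;> simp [E_heisRelabel]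

theorem heisTable_heisRelabel_apply_eq_zero (i j : Fin n) {m : Fin n} (hm : m.val ≠ 4) :
    heisTable n k (heisRelabel hk hkn i) (heisRelabel hk hkn j) (heisRelabel hk hkn m) = 0 := by
  rw [← Function.comp_apply (f := heisTable n k _ _), heisTable_heisRelabel]
  split_ifs <;> simp [E, hm]

theorem isHeisPair_heisRelabel_iff {i j : Fin n} (hj : j.val < 5) :
    IsHeisPair k (heisRelabel hk hkn i) (heisRelabel hk hkn j) ↔
      i.val = 0 ∧ j.val = 2 ∨ i.val = 1 ∧ j.val = 3 := by
  rw [heisRelabel_val, heisRelabel_val]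
  split_ifs <;> omega

theorem n51_eq_ofTable_heisRelabel :
    n51 n = ofTable fun i j => if i.val < 5 ∧ j.val < 5 then
      heisTable n k (heisRelabel hk hkn i) (heisRelabel hk hkn j) ∘ heisRelabel hk hkn else 0 := by
  unfold n51
  congr! 3 with i j
  by_cases hij : i.val < 5 ∧ j.val < 5
  · rw [if_pos hij, heisTable_heisRelabel]
    simp only [isHeisPair_heisRelabel_iff hk hkn hij.2, isHeisPair_heisRelabel_iff hk hkn hij.1]
    split_ifs <;> first | omega | rfl
  · rw [if_neg hij]
    split_ifs <;> first | omega | rfl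

end heisRelabel

theorem heisenberg_degenerates_n51_general (n k : ℕ) (hk : 2 ≤ k)
    (hkn : 2 * k + 1 ≤ n) :
    n51 n ∈ closure (orb (heis n k)) := by
  let σ := heisRelabel hk hkn
  refine closure_mono (orb_act_subset (LinearEquiv.funCongrLeft ℂ ℂ σ) (heis n k)) ?_
  rw [n51_eq_ofTable_heisRelabel hk hkn, heis_eq_ofTable, act_funCongrLeft_ofTable]
  exact ofTable_restrict_mem_closure_orb _ (fun m => m.val < 5)
    fun i j m hm => heisTable_heisRelabel_apply_eq_zero hk hkn i j (by omega)

/-- the Heisenberg multiplication with `k ≥ 2` degenerates to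
`n₅,₁ ⊕ 𝔞_{n-5}`. -/
theorem heisenberg_degenerates_n51 (n k : ℕ) (hn : 5 ≤ n) (hk : 2 ≤ k)
    (hkn : 2 * k + 1 ≤ n) :
    n51 n ∈ closure (orb (heis n k)) :=
  heisenberg_degenerates_n51_general n k hk hkn
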